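/- arXiv:2405.08727 — 6 statements merged into one kernel-verified Lean document; each statement's English description precedes it below -/
import Mathlib

section
/- Let β: 𝒳 → ℝ be measurable, X a random element of 𝒳, δ ∈ [0,1], and suppose q is a number with P[β(X) > q] = δ (i.e., the (1-δ)-quantile of β(X) is unique). Then for any measurable Δ: 𝒳 → [0,1] with E[Δ(X)] ≤ δ, we have E[1(β(X) > q) β(X)] ≥ E[Δ(X) β(X)], provided q ≥ 0. -/
/-!
Pointwise, `Δ (β - q) ≤ 1(β > q) (β - q)` for every `Δ ∈ [0, 1]`: both sides vanish or the
right one wins according to the sign of `β - q`. Integrating gives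
`E[Δ β] - q E[Δ] ≤ E[1(β > q) β] - q P[β > q]`, and the budget `E[Δ] ≤ δ = P[β > q]` together
with `q ≥ 0` removes the two `q`-terms.
-/

open MeasureTheory

lemma mul_sub_le_ite_mul_sub {d b q : ℝ} (hd : d ∈ Set.Icc (0 : ℝ) 1) :
    d * (b - q) ≤ (if q < b then (1 : ℝ) else 0) * (b - q) := by
  split_ifs
  · nlinarith [hd.2]
  · nlinarith [hd.1]

lemma norm_le_one_of_mem_Icc {x : ℝ} (hx : x ∈ Set.Icc (0 : ℝ) 1) : ‖x‖ ≤ 1 := by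
  rw [Real.norm_of_nonneg hx.1]
  exact hx.2

lemma ite_mem_Icc (p : Prop) [Decidable p] : (if p then (1 : ℝ) else 0) ∈ Set.Icc (0 : ℝ) 1 := by
  split_ifs <;> simp

section Threshold

variable {Ω : Type*} [MeasurableSpace Ω] {μ : Measure Ω}

lemma integral_ite_lt_eq_measureReal {f : Ω → ℝ} (hf : AEMeasurable f μ) (q : ℝ) :
    ∫ ω, (if q < f ω then (1 : ℝ) else 0) ∂μ = μ.real {ω | q < f ω} := by
  have hs : NullMeasurableSet {ω | q < f ω} μ := nullMeasurableSet_lt aemeasurable_const hf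
  have hite : (fun ω => if q < f ω then (1 : ℝ) else 0) = {ω | q < f ω}.indicator 1 := by
    funext ω
    simp only [Set.indicator_apply, Set.mem_ofPred_eq, Pi.one_apply]
  rw [hite, integral_indicator₀ hs, Pi.one_def, setIntegral_const, smul_eq_mul, mul_one]

theorem integral_mul_le_integral_ite_lt_mul [IsFiniteMeasure μ] {f d : Ω → ℝ} {q : ℝ}
    (hq : 0 ≤ q) (hf : Integrable f μ) (hd : AEStronglyMeasurable d μ)
    (hd01 : ∀ ω, d ω ∈ Set.Icc (0 : ℝ) 1) (hbudget : ∫ ω, d ω ∂μ ≤ μ.real {ω | q < f ω}) :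
    ∫ ω, d ω * f ω ∂μ ≤ ∫ ω, (if q < f ω then (1 : ℝ) else 0) * f ω ∂μ := by
  set g : Ω → ℝ := fun ω => if q < f ω then 1 else 0
  have hg : AEStronglyMeasurable g μ :=
    (aemeasurable_const.indicator₀ (nullMeasurableSet_lt aemeasurable_const hf.aemeasurable)
      ).aestronglyMeasurable
  have hd_le : ∀ᵐ ω ∂μ, ‖d ω‖ ≤ 1 := ae_of_all _ fun ω => norm_le_one_of_mem_Icc (hd01 ω)
  have hg_le : ∀ᵐ ω ∂μ, ‖g ω‖ ≤ 1 := ae_of_all _ fun ω => norm_le_one_of_mem_Icc (ite_mem_Icc _)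
  have hd_int : Integrable d μ := Integrable.of_bound hd 1 hd_le
  have hg_int : Integrable g μ := Integrable.of_bound hg 1 hg_le
  have hdf_int : Integrable (fun ω => d ω * f ω) μ := hf.bdd_mul hd hd_le
  have hgf_int : Integrable (fun ω => g ω * f ω) μ := hf.bdd_mul hg hg_le
  have hpointwise : ∫ ω, (d ω * f ω - d ω * q) ∂μ ≤ ∫ ω, (g ω * f ω - g ω * q) ∂μ :=
    integral_mono (hdf_int.sub (hd_int.mul_const q)) (hgf_int.sub (hg_int.mul_const q))
      fun ω => by simpa only [mul_sub] using mul_sub_le_ite_mul_sub (hd01 ω)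
  rw [integral_sub hdf_int (hd_int.mul_const q), integral_sub hgf_int (hg_int.mul_const q),
    integral_mul_const, integral_mul_const,
    integral_ite_lt_eq_measureReal hf.aemeasurable] at hpointwise
  nlinarith [mul_le_mul_of_nonneg_right hbudget hq]

end Threshold

theorem stmt_4_general {Ω 𝒳 : Type*} [MeasurableSpace Ω] [MeasurableSpace 𝒳]
    (P : Measure Ω) [IsProbabilityMeasure P]
    (X : Ω → 𝒳) (hX : Measurable X)
    (β : 𝒳 → ℝ) (hint : Integrable (fun ω => β (X ω)) P)
    (δ q : ℝ) (hq0 : 0 ≤ q)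
    (hq : P {ω | q < β (X ω)} = ENNReal.ofReal δ)
    (Δ : 𝒳 → ℝ) (hΔ : Measurable Δ) (hΔ01 : ∀ x, Δ x ∈ Set.Icc (0 : ℝ) 1)
    (hbudget : (∫ ω, Δ (X ω) ∂P) ≤ δ) :
    (∫ ω, Δ (X ω) * β (X ω) ∂P)
      ≤ ∫ ω, (if q < β (X ω) then (1 : ℝ) else 0) * β (X ω) ∂P := by
  refine integral_mul_le_integral_ite_lt_mul hq0 hint (hΔ.comp hX).aestronglyMeasurable
    (fun ω => hΔ01 (X ω)) ?_
  rw [measureReal_def, hq, ENNReal.toReal_ofReal']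
  exact hbudget.trans (le_max_left _ _)

/-- thresholding the priority score `β` at its unique `(1-δ)`-quantile `q ≥ 0`
maximizes `E[Δ(X)β(X)]` over all fractional contact rules `Δ : 𝒳 → [0,1]` with budget
`E[Δ(X)] ≤ δ`. -/
theorem stmt_4 {Ω 𝒳 : Type*} [MeasurableSpace Ω] [MeasurableSpace 𝒳]
    (P : Measure Ω) [IsProbabilityMeasure P]
    (X : Ω → 𝒳) (hX : Measurable X)
    (β : 𝒳 → ℝ) (hβ : Measurable β) (hint : Integrable (fun ω => β (X ω)) P)
    (δ q : ℝ) (hδ : δ ∈ Set.Icc (0 : ℝ) 1) (hq0 : 0 ≤ q)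
    (hq : P {ω | q < β (X ω)} = ENNReal.ofReal δ)
    (Δ : 𝒳 → ℝ) (hΔ : Measurable Δ) (hΔ01 : ∀ x, Δ x ∈ Set.Icc (0 : ℝ) 1)
    (hbudget : (∫ ω, Δ (X ω) ∂P) ≤ δ) :
    (∫ ω, Δ (X ω) * β (X ω) ∂P)
      ≤ ∫ ω, (if q < β (X ω) then (1 : ℝ) else 0) * β (X ω) ∂P :=
  stmt_4_general P X hX β hint δ q hq0 hq Δ hΔ hΔ01 hbudget
end

section
/- Let τ and τ̂ be measurable real-valued functions of a random variable X, h* = 1(τ > 0), ĥ* = 1(τ̂ > 0). Suppose the margin condition P[|τ(X)| ≤ t] ≤ C t^a holds for all t ≥ 0 with constants C > 0, a > 0. Then E[|ĥ*(X) - h*(X)| · |τ(X)|] ≤ C' ‖τ̂ - τ‖_∞^{1+a} for some constant C' depending only on C and a. -/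
open MeasureTheory

/-!
Where the plug-in rule `1(τ̂ > 0)` and the oracle rule `1(τ > 0)` disagree, `τ` and `τ̂` lie on
opposite sides of `0`, so `|τ| ≤ |τ̂ - τ| ≤ T`. The integrand is therefore at most `T` times the
indicator of the margin event `{|τ| ≤ T}`, whose probability is at most `C T^a`.
-/

theorem abs_le_abs_sub_of_pos_ne_pos {x y : ℝ} (h : ¬(0 < y ↔ 0 < x)) : |x| ≤ |y - x| := by
  rcases lt_or_ge 0 x with hx | hx
  · have hy : y ≤ 0 := le_of_not_gt fun hy => h (iff_of_true hy hx)
    rw [abs_of_pos hx, abs_sub_comm, abs_of_nonneg (by linarith)]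
    linarith
  · have hy : 0 < y := by_contra fun hy => h (iff_of_false hy (not_lt.mpr hx))
    rw [abs_of_nonpos hx, abs_of_nonneg (by linarith)]
    linarith

theorem abs_ite_pos_sub_ite_pos_mul_abs_le {x y T : ℝ} (hT : 0 ≤ T) (hyx : |y - x| ≤ T) :
    |(if 0 < y then (1 : ℝ) else 0) - (if 0 < x then (1 : ℝ) else 0)| * |x|
      ≤ {z : ℝ | |z| ≤ T}.indicator (fun _ => T) x := by
  by_cases hsign : 0 < y ↔ 0 < x
  · simp only [if_congr hsign rfl rfl, sub_self, abs_zero, zero_mul]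
    exact Set.indicator_nonneg (fun _ _ => hT) x
  · have hxT : |x| ≤ T := (abs_le_abs_sub_of_pos_ne_pos hsign).trans hyx
    rw [Set.indicator_of_mem (show x ∈ {z : ℝ | |z| ≤ T} from hxT)]
    have hdiff : |(if 0 < y then (1 : ℝ) else 0) - (if 0 < x then (1 : ℝ) else 0)| ≤ 1 := by
      split_ifs <;> norm_num
    calc _ ≤ 1 * |x| := mul_le_mul_of_nonneg_right hdiff (abs_nonneg x)
      _ ≤ T := by rwa [one_mul]

theorem integral_le_mul_measureReal_of_le_indicator {α : Type*} [MeasurableSpace α]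
    {μ : Measure α} [IsFiniteMeasure μ] {f : α → ℝ} {s : Set α} {T : ℝ} (hT : 0 ≤ T)
    (hf : 0 ≤ᵐ[μ] f) (hfs : f ≤ᵐ[μ] s.indicator fun _ => T) :
    ∫ x, f x ∂μ ≤ T * μ.real s := by
  set t := toMeasurable μ s
  have ht : MeasurableSet t := measurableSet_toMeasurable μ s
  have hft : f ≤ᵐ[μ] t.indicator fun _ => T := hfs.mono fun x hx =>
    hx.trans (Set.indicator_le_indicator_of_subset (subset_toMeasurable μ s) (fun _ => hT) x)
  calc ∫ x, f x ∂μ ≤ ∫ x, t.indicator (fun _ => T) x ∂μ :=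
        integral_mono_of_nonneg hf ((integrable_const T).indicator ht) hft
    _ = T * μ.real s := by
        rw [integral_indicator_const T ht, measureReal_def,
          measure_toMeasurable, ← measureReal_def, smul_eq_mul, mul_comm]

theorem stmt_7_general {Ω 𝒳 : Type*} [MeasurableSpace Ω] [MeasurableSpace 𝒳]
    (P : Measure Ω) [IsProbabilityMeasure P]
    (X : Ω → 𝒳)
    (τ τh : 𝒳 → ℝ)
    (C a : ℝ) (ha : 0 < a)
    (hmargin : ∀ t ≥ (0 : ℝ), (P {ω | |τ (X ω)| ≤ t}).toReal ≤ C * t ^ a)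
    (T : ℝ) (hT : 0 ≤ T) (hTbound : ∀ᵐ ω ∂P, |τh (X ω) - τ (X ω)| ≤ T) :
    (∫ ω, |(if 0 < τh (X ω) then (1 : ℝ) else 0) - (if 0 < τ (X ω) then (1 : ℝ) else 0)|
        * |τ (X ω)| ∂P)
      ≤ C * T ^ (1 + a) := by
  have hpointwise : ∀ᵐ ω ∂P,
      |(if 0 < τh (X ω) then (1 : ℝ) else 0) - (if 0 < τ (X ω) then (1 : ℝ) else 0)| * |τ (X ω)|
        ≤ {ω | |τ (X ω)| ≤ T}.indicator (fun _ => T) ω := by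
    filter_upwards [hTbound] with ω hω
    exact abs_ite_pos_sub_ite_pos_mul_abs_le hT hω
  have hnonneg : ∀ᵐ ω ∂P, 0 ≤
      |(if 0 < τh (X ω) then (1 : ℝ) else 0) - (if 0 < τ (X ω) then (1 : ℝ) else 0)| * |τ (X ω)| :=
    .of_forall fun ω => by positivity
  calc _ ≤ T * P.real {ω | |τ (X ω)| ≤ T} :=
        integral_le_mul_measureReal_of_le_indicator hT hnonneg hpointwise
    _ ≤ T * (C * T ^ a) := mul_le_mul_of_nonneg_left (hmargin T hT) hT
    _ = C * T ^ (1 + a) := by rw [Real.rpow_one_add' hT (by positivity)]; ring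

/-- under the margin condition `P[|τ(X)| ≤ t] ≤ C t^a`, with
`h* = 1(τ > 0)`, `ĥ* = 1(τ̂ > 0)`, and `T ≥ ‖τ̂ - τ‖_∞` (essential sup bound),
`E[|ĥ*(X) - h*(X)| |τ(X)|] ≤ C T^{1+a}` (so the constant depends only on `C, a`). -/
theorem stmt_7 {Ω 𝒳 : Type*} [MeasurableSpace Ω] [MeasurableSpace 𝒳]
    (P : Measure Ω) [IsProbabilityMeasure P]
    (X : Ω → 𝒳) (hX : Measurable X)
    (τ τh : 𝒳 → ℝ) (hτ : Measurable τ) (hτh : Measurable τh)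
    (hint : Integrable (fun ω => τ (X ω)) P)
    (C a : ℝ) (hC : 0 < C) (ha : 0 < a)
    (hmargin : ∀ t ≥ (0 : ℝ), (P {ω | |τ (X ω)| ≤ t}).toReal ≤ C * t ^ a)
    (T : ℝ) (hT : 0 ≤ T) (hTbound : ∀ᵐ ω ∂P, |τh (X ω) - τ (X ω)| ≤ T) :
    (∫ ω, |(if 0 < τh (X ω) then (1 : ℝ) else 0) - (if 0 < τ (X ω) then (1 : ℝ) else 0)|
        * |τ (X ω)| ∂P)
      ≤ C * T ^ (1 + a) :=
  stmt_7_general P X τ τh C a ha hmargin T hT hTbound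
end

section
/- Let β, β̂ be measurable real functions of X, q, q̂ real numbers, Δ* = 1(β > q), Δ̂* = 1(β̂ > q̂). Under the margin condition P[|β(X) - q| ≤ t] ≤ C t^b for all t ≥ 0 (C > 0, b > 0), |E[(Δ̂*(X) - Δ*(X))(β(X) - q)]| ≤ C' (‖β̂ - β‖_∞ + |q̂ - q|)^{1+b} for a constant C' depending only on C and b. -/
open MeasureTheory

/-
The two threshold indicators `1(β̂ > q̂)` and `1(β > q)` can only disagree where `β` is within
`s := T + |q̂ - q|` of `q` (as `T ≥ ‖β̂ - β‖_∞`), and there the integrand is at most `|β - q| ≤ s`.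
Hence the expectation is at most `s · P[|β - q| ≤ s] ≤ s · C s^b` by the margin condition.
-/

lemma abs_sub_le_of_ite_lt_ne {a a' q q' : ℝ}
    (h : (if q' < a' then (1 : ℝ) else 0) ≠ (if q < a then 1 else 0)) :
    |a - q| ≤ |a' - a| + |q' - q| := by
  have ha := abs_le.mp (le_refl |a' - a|)
  have hq := abs_le.mp (le_refl |q' - q|)
  rw [abs_le]
  split_ifs at h with h₁ h₂ h₂ <;> norm_num at h <;> constructor <;> linarith

lemma abs_ite_lt_sub_ite_lt_mul_le_indicator {a a' q q' s : ℝ} (hs : |a' - a| + |q' - q| ≤ s) :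
    |((if q' < a' then (1 : ℝ) else 0) - (if q < a then 1 else 0)) * (a - q)|
      ≤ {x | |x - q| ≤ s}.indicator (fun _ => s) a := by
  by_cases h : (if q' < a' then (1 : ℝ) else 0) = (if q < a then 1 else 0)
  · rw [h, sub_self, zero_mul, abs_zero]
    exact Set.indicator_nonneg (fun _ _ => (add_nonneg (abs_nonneg _) (abs_nonneg _)).trans hs) a
  · have hmem : |a - q| ≤ s := (abs_sub_le_of_ite_lt_ne h).trans hs
    have hdiff : |(if q' < a' then (1 : ℝ) else 0) - (if q < a then 1 else 0)| ≤ 1 := by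
      split_ifs <;> norm_num
    rw [Set.indicator_of_mem (show a ∈ {x | |x - q| ≤ s} from hmem), abs_mul]
    exact (mul_le_of_le_one_left (abs_nonneg _) hdiff).trans hmem

lemma abs_integral_le_measureReal_mul_of_abs_le_indicator {Ω : Type*} [MeasurableSpace Ω]
    {μ : Measure Ω} [IsFiniteMeasure μ] {f : Ω → ℝ} {A : Set Ω} (hA : MeasurableSet A) {s : ℝ}
    (h : ∀ᵐ ω ∂μ, |f ω| ≤ A.indicator (fun _ => s) ω) :
    |∫ ω, f ω ∂μ| ≤ μ.real A * s := by
  rw [← smul_eq_mul, ← integral_indicator_const s hA]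
  exact norm_integral_le_of_norm_le (f := f) ((integrable_const s).indicator hA) h

theorem stmt_8_general {Ω 𝒳 : Type*} [MeasurableSpace Ω] [MeasurableSpace 𝒳]
    (P : Measure Ω) [IsProbabilityMeasure P]
    (X : Ω → 𝒳) (hX : Measurable X)
    (β βh : 𝒳 → ℝ) (hβ : Measurable β)
    (q qh : ℝ)
    (C b : ℝ) (hb : 0 < b)
    (hmargin : ∀ t ≥ (0 : ℝ), (P {ω | |β (X ω) - q| ≤ t}).toReal ≤ C * t ^ b)
    (T : ℝ) (hT : 0 ≤ T) (hTbound : ∀ᵐ ω ∂P, |βh (X ω) - β (X ω)| ≤ T) :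
    |∫ ω, ((if qh < βh (X ω) then (1 : ℝ) else 0) - (if q < β (X ω) then (1 : ℝ) else 0))
        * (β (X ω) - q) ∂P|
      ≤ C * (T + |qh - q|) ^ (1 + b) := by
  set s := T + |qh - q|
  have hs : 0 ≤ s := by positivity
  have hA : MeasurableSet {ω | |β (X ω) - q| ≤ s} :=
    measurableSet_le ((hβ.comp hX).sub measurable_const).abs measurable_const
  have hpointwise : ∀ᵐ ω ∂P,
      |((if qh < βh (X ω) then (1 : ℝ) else 0) - (if q < β (X ω) then (1 : ℝ) else 0))
        * (β (X ω) - q)| ≤ {ω | |β (X ω) - q| ≤ s}.indicator (fun _ => s) ω := by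
    filter_upwards [hTbound] with ω hω
    exact abs_ite_lt_sub_ite_lt_mul_le_indicator (add_le_add_left hω _)
  calc _ ≤ P.real {ω | |β (X ω) - q| ≤ s} * s :=
        abs_integral_le_measureReal_mul_of_abs_le_indicator hA hpointwise
    _ ≤ C * s ^ b * s := by gcongr; exact hmargin s hs
    _ = C * s ^ (1 + b) := by rw [Real.rpow_one_add' hs (by positivity)]; ring

/-- with `Δ* = 1(β > q)`, `Δ̂* = 1(β̂ > q̂)`, under the margin condition
`P[|β(X) - q| ≤ t] ≤ C t^b` and `T ≥ ‖β̂ - β‖_∞`,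
`|E[(Δ̂*(X) - Δ*(X))(β(X) - q)]| ≤ C (T + |q̂ - q|)^{1+b}`. -/
theorem stmt_8 {Ω 𝒳 : Type*} [MeasurableSpace Ω] [MeasurableSpace 𝒳]
    (P : Measure Ω) [IsProbabilityMeasure P]
    (X : Ω → 𝒳) (hX : Measurable X)
    (β βh : 𝒳 → ℝ) (hβ : Measurable β) (hβh : Measurable βh)
    (q qh : ℝ)
    (C b : ℝ) (hC : 0 < C) (hb : 0 < b)
    (hmargin : ∀ t ≥ (0 : ℝ), (P {ω | |β (X ω) - q| ≤ t}).toReal ≤ C * t ^ b)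
    (T : ℝ) (hT : 0 ≤ T) (hTbound : ∀ᵐ ω ∂P, |βh (X ω) - β (X ω)| ≤ T) :
    |∫ ω, ((if qh < βh (X ω) then (1 : ℝ) else 0) - (if q < β (X ω) then (1 : ℝ) else 0))
        * (β (X ω) - q) ∂P|
      ≤ C * (T + |qh - q|) ^ (1 + b) :=
  stmt_8_general P X hX β βh hβ q qh C b hb hmargin T hT hTbound
end

section
/- Suppose |ν_a(X) - μ_a(X)| ≤ Γ a.s. for a ∈ {0,1}, where ν_a(X) = E[Y(a)|X, A=1-a], μ_a(X) = E[Y|X,A=a], π(X) = P[A=1|X] ∈ (0,1). Then for any measurable Δ: 𝒳 → [0,1] and h*: 𝒳 → {0,1}, |E[Δ(X){h*(X)(μ₁†(X)-μ₁(X)) + (1-h*(X))(μ₀†(X)-μ₀(X))}]| ≤ Γ E[Δ(X)c(X)], where μ₁† - μ₁ = (1-π)(ν₁-μ₁), μ₀† - μ₀ = π(ν₀-μ₀), and c = h*(1-π) + (1-h*)π. -/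
open MeasureTheory

/-- under the sensitivity model `|ν_a - μ_a| ≤ Γ` a.s. (`a ∈ {0,1}`), with
`μ₁† - μ₁ = (1-π)(ν₁-μ₁)`, `μ₀† - μ₀ = π(ν₀-μ₀)` and `c = h*(1-π) + (1-h*)π`,
for any contact rule `Δ : → [0,1]` and binary `h*`,
`|E[Δ{h*(μ₁†-μ₁) + (1-h*)(μ₀†-μ₀)}]| ≤ Γ E[Δ c]`. -/
theorem stmt_15 {Ω : Type*} [MeasurableSpace Ω] (P : Measure Ω) [IsProbabilityMeasure P]
    (π ν0 ν1 μ0 μ1 Δ hstar : Ω → ℝ)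
    (hπ : Measurable π) (hν0 : Measurable ν0) (hν1 : Measurable ν1)
    (hμ0 : Measurable μ0) (hμ1 : Measurable μ1) (hΔ : Measurable Δ)
    (hh : Measurable hstar)
    (hπ01 : ∀ ω, π ω ∈ Set.Ioo (0 : ℝ) 1) (hΔ01 : ∀ ω, Δ ω ∈ Set.Icc (0 : ℝ) 1)
    (hhval : ∀ ω, hstar ω = 0 ∨ hstar ω = 1)
    (Γ : ℝ) (hΓ : 0 ≤ Γ)
    (hsens : ∀ᵐ ω ∂P, |ν0 ω - μ0 ω| ≤ Γ ∧ |ν1 ω - μ1 ω| ≤ Γ) :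
    |∫ ω, Δ ω * (hstar ω * ((1 - π ω) * (ν1 ω - μ1 ω))
        + (1 - hstar ω) * (π ω * (ν0 ω - μ0 ω))) ∂P|
      ≤ Γ * ∫ ω, Δ ω * (hstar ω * (1 - π ω) + (1 - hstar ω) * π ω) ∂P := by
  set f : Ω → ℝ := fun ω => Δ ω * (hstar ω * ((1 - π ω) * (ν1 ω - μ1 ω))
      + (1 - hstar ω) * (π ω * (ν0 ω - μ0 ω))) with hf_def
  set g : Ω → ℝ := fun ω => Δ ω * (hstar ω * (1 - π ω) + (1 - hstar ω) * π ω) with hg_def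
  have hfm : Measurable f := by
    apply hΔ.mul
    exact (hh.mul ((measurable_const.sub hπ).mul (hν1.sub hμ1))).add
      ((measurable_const.sub hh).mul (hπ.mul (hν0.sub hμ0)))
  have hgm : Measurable g := by
    apply hΔ.mul
    exact (hh.mul (measurable_const.sub hπ)).add ((measurable_const.sub hh).mul hπ)
  have hg01 : ∀ ω, 0 ≤ g ω ∧ g ω ≤ 1 := by
    intro ω
    have h1 := (hπ01 ω).1
    have h2 := (hπ01 ω).2
    have h3 := (hΔ01 ω).1
    have h4 := (hΔ01 ω).2
    rcases hhval ω with h | h <;> simp [hg_def, h] <;> constructor <;> nlinarith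
  have hbound : ∀ᵐ ω ∂P, |f ω| ≤ Γ * g ω := by
    filter_upwards [hsens] with ω ⟨h0, h1⟩
    have hΔ0 := (hΔ01 ω).1
    have hπ1 := (hπ01 ω).1.le
    have hπ2 := (hπ01 ω).2.le
    rcases hhval ω with h | h
    · simp only [hf_def, hg_def, h, zero_mul, one_mul, sub_zero, zero_add, mul_zero]
      rw [abs_mul, abs_mul, abs_of_nonneg hΔ0, abs_of_nonneg hπ1]
      calc Δ ω * (π ω * |ν0 ω - μ0 ω|) ≤ Δ ω * (π ω * Γ) := by
            apply mul_le_mul_of_nonneg_left _ hΔ0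
            exact mul_le_mul_of_nonneg_left h0 hπ1
        _ = Γ * (Δ ω * π ω) := by ring
    · simp only [hf_def, hg_def, h, one_mul, sub_self, zero_mul, add_zero]
      rw [abs_mul, abs_mul, abs_of_nonneg hΔ0, abs_of_nonneg (by linarith : (0:ℝ) ≤ 1 - π ω)]
      calc Δ ω * ((1 - π ω) * |ν1 ω - μ1 ω|) ≤ Δ ω * ((1 - π ω) * Γ) := by
            apply mul_le_mul_of_nonneg_left _ hΔ0
            exact mul_le_mul_of_nonneg_left h1 (by linarith)
        _ = Γ * (Δ ω * (1 - π ω)) := by ring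
  have hfint : Integrable f P := by
    apply Integrable.mono' (integrable_const Γ) hfm.aestronglyMeasurable
    filter_upwards [hbound] with ω hω
    calc |f ω| ≤ Γ * g ω := hω
      _ ≤ Γ * 1 := mul_le_mul_of_nonneg_left (hg01 ω).2 hΓ
      _ = Γ := mul_one Γ
  have hgint : Integrable (fun ω => Γ * g ω) P := by
    apply Integrable.mono' (integrable_const Γ) (hgm.const_mul Γ).aestronglyMeasurable
    refine Filter.Eventually.of_forall fun ω => ?_
    rw [Real.norm_eq_abs, abs_of_nonneg (mul_nonneg hΓ (hg01 ω).1)]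
    calc Γ * g ω ≤ Γ * 1 := mul_le_mul_of_nonneg_left (hg01 ω).2 hΓ
      _ = Γ := mul_one Γ
  calc |∫ ω, f ω ∂P| ≤ ∫ ω, |f ω| ∂P := (Real.norm_eq_abs _ ▸ norm_integral_le_integral_norm f : |∫ ω, f ω ∂P| ≤ ∫ ω, ‖f ω‖ ∂P).trans_eq (by simp [Real.norm_eq_abs])
    _ ≤ ∫ ω, Γ * g ω ∂P := integral_mono_ae hfint.abs hgint hbound
    _ = Γ * ∫ ω, g ω ∂P := integral_const_mul Γ _
end

section
/- Under the sensitivity model |ν_a - μ_a| ≤ Γ for a ∈ {0,1}, we have ‖β† - β‖_∞ ≤ 2Γ, where β† = h†τ† + μ₀† - m with h† = 1(τ† > 0), τ† = μ₁† - μ₀†, m = πμ₁ + (1-π)μ₀, and β = τ(h* - π) with τ = μ₁ - μ₀, h* = 1(τ > 0). Consequently, the (1-δ)-quantiles satisfy |q†_{1-δ} - q_{1-δ}| ≤ 2Γ for any δ ∈ (0,1) at which both quantiles are unique. -/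
open MeasureTheory

/-- under the sensitivity model `|ν_a - μ_a| ≤ Γ`, the true conditional
potential benefit `β† = h†τ† + μ₀† - m` and its observational analogue `β = τ(h* - π)`
satisfy `‖β† - β‖_∞ ≤ 2Γ`; consequently unique `(1-δ)`-quantiles satisfy
`|q†_{1-δ} - q_{1-δ}| ≤ 2Γ`. -/
theorem stmt_16 {Ω : Type*} [MeasurableSpace Ω] (P : Measure Ω) [IsProbabilityMeasure P]
    (π ν0 ν1 μ0 μ1 : Ω → ℝ)
    (hπ01 : ∀ ω, π ω ∈ Set.Ioo (0 : ℝ) 1)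
    (Γ : ℝ) (hΓ : 0 ≤ Γ)
    (hsens : ∀ ω, |ν0 ω - μ0 ω| ≤ Γ ∧ |ν1 ω - μ1 ω| ≤ Γ)
    (μ0d μ1d τ τd hstar hdag mY β βd : Ω → ℝ)
    (hμ1d : ∀ ω, μ1d ω = μ1 ω + (1 - π ω) * (ν1 ω - μ1 ω))
    (hμ0d : ∀ ω, μ0d ω = μ0 ω + π ω * (ν0 ω - μ0 ω))
    (hτ : ∀ ω, τ ω = μ1 ω - μ0 ω)
    (hτd : ∀ ω, τd ω = μ1d ω - μ0d ω)
    (hhstar : ∀ ω, hstar ω = if 0 < τ ω then (1 : ℝ) else 0)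
    (hhdag : ∀ ω, hdag ω = if 0 < τd ω then (1 : ℝ) else 0)
    (hmY : ∀ ω, mY ω = π ω * μ1 ω + (1 - π ω) * μ0 ω)
    (hβ : ∀ ω, β ω = τ ω * (hstar ω - π ω))
    (hβd : ∀ ω, βd ω = hdag ω * τd ω + μ0d ω - mY ω) :
    (∀ ω, |βd ω - β ω| ≤ 2 * Γ)
    ∧ ∀ δ ∈ Set.Ioo (0 : ℝ) 1, ∀ qd q : ℝ,
        P {ω | qd < βd ω} = ENNReal.ofReal δ →
        (∀ r, P {ω | r < βd ω} = ENNReal.ofReal δ → r = qd) →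
        P {ω | q < β ω} = ENNReal.ofReal δ →
        (∀ r, P {ω | r < β ω} = ENNReal.ofReal δ → r = q) →
        |qd - q| ≤ 2 * Γ := by
  have hpb : ∀ ω, |βd ω - β ω| ≤ 2 * Γ := by
    intro ω
    obtain ⟨h0, h1⟩ := hsens ω
    obtain ⟨hp0, hp1⟩ := hπ01 ω
    rw [abs_le] at h0 h1 ⊢
    simp only [hβd, hβ, hhdag, hhstar, hτd, hτ, hμ1d, hμ0d, hmY]
    split_ifs <;> constructor <;>
      nlinarith [h0.1, h0.2, h1.1, h1.2, mul_pos hp0 (sub_pos.mpr hp1),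
        mul_nonneg hp0.le (sub_nonneg.mpr (sub_le_iff_le_add.mp h0.2)),
        mul_nonneg hp0.le (sub_nonneg.mpr (neg_le_sub_iff_le_add.mp h0.1))]
  refine ⟨hpb, ?_⟩
  intro δ hδ qd q hqd huqd hq huq
  have hb1 : ∀ ω, βd ω ≤ β ω + 2 * Γ := fun ω => by
    have := (abs_le.mp (hpb ω)).2; linarith
  have hb2 : ∀ ω, β ω ≤ βd ω + 2 * Γ := fun ω => by
    have := (abs_le.mp (hpb ω)).1; linarith
  rw [abs_le]
  constructor
  · -- q - 2Γ ≤ qd ; suppose qd + 2Γ < q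
    by_contra h
    push_neg at h
    have hlt : qd + 2 * Γ < q := by linarith
    have hsub1 : {ω | q < β ω} ⊆ {ω | qd + 2 * Γ < β ω} :=
      fun ω hω => lt_trans hlt hω
    have hsub2 : {ω | qd + 2 * Γ < β ω} ⊆ {ω | qd < βd ω} := by
      intro ω hω
      have := hb2 ω
      simp only [Set.mem_setOf_eq] at hω ⊢
      linarith
    have h1 : P {ω | qd + 2 * Γ < β ω} = ENNReal.ofReal δ :=
      le_antisymm (hqd ▸ measure_mono hsub2) (hq ▸ measure_mono hsub1)
    have := huq _ h1
    linarith
  · -- qd ≤ q + 2Γ; suppose q + 2Γ < qd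
    by_contra h
    push_neg at h
    have hlt : q + 2 * Γ < qd := by linarith
    have hsub1 : {ω | qd < βd ω} ⊆ {ω | q + 2 * Γ < βd ω} :=
      fun ω hω => lt_trans hlt hω
    have hsub2 : {ω | q + 2 * Γ < βd ω} ⊆ {ω | q < β ω} := by
      intro ω hω
      have := hb1 ω
      simp only [Set.mem_setOf_eq] at hω ⊢
      linarith
    have h1 : P {ω | q + 2 * Γ < βd ω} = ENNReal.ofReal δ :=
      le_antisymm (hq ▸ measure_mono hsub2) (hqd ▸ measure_mono hsub1)
    have := huqd _ h1
    linarith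
end

section
/- Let τ and τ̂ be measurable real functions of X with h* = 1(τ > 0), ĥ* = 1(τ̂ > 0). Under the margin condition P[|τ(X)| ≤ t] ≤ C t^a for all t ≥ 0 (C, a > 0), for every t > 0: E[(ĥ*(X) - h*(X))²] ≤ C t^a + ‖τ̂ - τ‖_{L₁}/t, where ‖τ̂ - τ‖_{L₁} = E|τ̂(X) - τ(X)|. In particular, if ‖τ̂ - τ‖_{L₂} → 0 then ‖ĥ* - h*‖_{L₂} → 0. -/
open MeasureTheory Filter Topology
open scoped ENNReal

/-! When the two indicators disagree, `τ̂ - τ` has to cross the gap between `τ` and `0`, so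
`(ĥ* - h*)² ≤ 1(|τ| ≤ |τ̂ - τ|)`. The event `|τ| ≤ |τ̂ - τ|` lies in `{|τ| ≤ t} ∪ {t ≤ |τ̂ - τ|}`,
whose probabilities are bounded by the margin condition and by Markov's inequality.
For the limit, `L₂`-convergence gives `L₁`-convergence, and choosing `t` small first makes
`C t^a` small before `E|τ̂ - τ| / t` is. -/

lemma sq_ite_pos_sub_ite_pos_le (x y : ℝ) :
    ((if 0 < y then (1 : ℝ) else 0) - (if 0 < x then (1 : ℝ) else 0)) ^ 2
      ≤ if |x| ≤ |y - x| then 1 else 0 := by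
  split_ifs <;> norm_num <;> cases abs_cases x <;> cases abs_cases (y - x) <;> linarith

lemma tendsto_zero_of_forall_le_add_div {ι : Type*} {l : Filter ι} {u e : ι → ℝ} {g : ℝ → ℝ}
    (hg : Tendsto g (𝓝[>] 0) (𝓝 0)) (he : Tendsto e l (𝓝 0)) (hu₀ : ∀ i, 0 ≤ u i)
    (hu : ∀ t > 0, ∀ᶠ i in l, u i ≤ g t + e i / t) : Tendsto u l (𝓝 0) := by
  refine tendsto_order.2 ⟨fun b hb => .of_forall fun i => hb.trans_le (hu₀ i), fun ε hε => ?_⟩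
  obtain ⟨t, hgt, ht⟩ := ((hg.eventually (gt_mem_nhds (half_pos hε))).and
    self_mem_nhdsWithin).exists
  have het : ∀ᶠ i in l, e i / t < ε / 2 := by
    have het := he.div_const t
    rw [zero_div] at het
    exact het.eventually (gt_mem_nhds (half_pos hε))
  filter_upwards [hu t ht, het] with i hi hei
  linarith

lemma tendsto_const_mul_rpow_nhdsGT_zero (C : ℝ) {a : ℝ} (ha : 0 < a) :
    Tendsto (fun t : ℝ => C * t ^ a) (𝓝[>] 0) (𝓝 0) := by
  have := (Real.continuousAt_rpow_const 0 a (Or.inr ha.le)).tendsto.const_mul C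
  exact tendsto_nhdsWithin_of_tendsto_nhds (by simpa [Real.zero_rpow ha.ne'] using this)

lemma tendsto_eLpNorm_two_of_tendsto_integral_sq {α ι : Type*} [MeasurableSpace α] {μ : Measure α}
    {l : Filter ι} {f : ι → α → ℝ} (hf : ∀ i, MemLp (f i) 2 μ)
    (h : Tendsto (fun i => ∫ x, f i x ^ 2 ∂μ) l (𝓝 0)) :
    Tendsto (fun i => eLpNorm (f i) 2 μ) l (𝓝 0) := by
  have hsqrt : Tendsto (fun i => (∫ x, f i x ^ 2 ∂μ) ^ (2 : ℝ)⁻¹) l (𝓝 0) := by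
    simpa [Real.zero_rpow, Function.comp_def] using
      (Real.continuousAt_rpow_const 0 (2 : ℝ)⁻¹ (Or.inr (by norm_num))).tendsto.comp h
  simp_rw [fun i => (hf i).eLpNorm_eq_integral_rpow_norm two_ne_zero ENNReal.ofNat_ne_top]
  simpa [Real.rpow_two, Function.comp_def] using (ENNReal.continuous_ofReal.tendsto 0).comp hsqrt

section FiniteMeasure

variable {Ω : Type*} [MeasurableSpace Ω] {μ : Measure Ω} [IsFiniteMeasure μ]

lemma measureReal_setOf_le_le_add (f g : Ω → ℝ) (t : ℝ) :
    μ.real {ω | f ω ≤ g ω} ≤ μ.real {ω | f ω ≤ t} + μ.real {ω | t ≤ g ω} := by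
  refine (measureReal_mono fun ω (hω : f ω ≤ g ω) => ?_).trans (measureReal_union_le _ _)
  rcases le_total (f ω) t with h | h
  · exact Or.inl h
  · exact Or.inr (h.trans hω)

lemma memLp_ite_pos_sub_ite_pos {S T : Ω → ℝ} (hS : Measurable S) (hT : Measurable T)
    (p : ℝ≥0∞) :
    MemLp (fun ω => (if 0 < S ω then (1 : ℝ) else 0) - (if 0 < T ω then (1 : ℝ) else 0)) p μ := by
  have hind {R : Ω → ℝ} (hR : Measurable R) : Measurable fun ω => if 0 < R ω then (1 : ℝ) else 0 :=
    .ite (measurableSet_lt measurable_const hR) measurable_const measurable_const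
  refine MemLp.of_bound ((hind hS).sub (hind hT)).aestronglyMeasurable 1 (.of_forall fun ω => ?_)
  split_ifs <;> norm_num

lemma integral_sq_ite_pos_sub_ite_pos_le {S T : Ω → ℝ} (hS : Measurable S) (hT : Measurable T) :
    ∫ ω, ((if 0 < S ω then (1 : ℝ) else 0) - (if 0 < T ω then (1 : ℝ) else 0)) ^ 2 ∂μ
      ≤ μ.real {ω | |T ω| ≤ |S ω - T ω|} := by
  have hmeas : MeasurableSet {ω | |T ω| ≤ |S ω - T ω|} :=
    measurableSet_le (by fun_prop) (by fun_prop)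
  rw [← integral_indicator_one hmeas]
  refine integral_mono_of_nonneg (.of_forall fun ω => sq_nonneg _)
    ((integrable_const 1).indicator hmeas) (.of_forall fun ω => ?_)
  simpa [Set.indicator_apply] using sq_ite_pos_sub_ite_pos_le (T ω) (S ω)

lemma integral_sq_ite_pos_sub_ite_pos_le_add {S T : Ω → ℝ} (hS : Measurable S) (hT : Measurable T)
    (hint : Integrable (fun ω => S ω - T ω) μ) {t : ℝ} (ht : 0 < t) :
    ∫ ω, ((if 0 < S ω then (1 : ℝ) else 0) - (if 0 < T ω then (1 : ℝ) else 0)) ^ 2 ∂μ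
      ≤ μ.real {ω | |T ω| ≤ t} + (∫ ω, |S ω - T ω| ∂μ) / t := by
  have markov : μ.real {ω | t ≤ |S ω - T ω|} ≤ (∫ ω, |S ω - T ω| ∂μ) / t := by
    rw [le_div_iff₀' ht]
    exact mul_meas_ge_le_integral_of_nonneg (.of_forall fun ω => abs_nonneg _) hint.abs t
  calc _ ≤ μ.real {ω | |T ω| ≤ |S ω - T ω|} := integral_sq_ite_pos_sub_ite_pos_le hS hT
    _ ≤ μ.real {ω | |T ω| ≤ t} + μ.real {ω | t ≤ |S ω - T ω|} := measureReal_setOf_le_le_add _ _ t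
    _ ≤ _ := by gcongr

end FiniteMeasure

lemma tendsto_integral_abs_of_tendsto_eLpNorm_two {Ω ι : Type*} [MeasurableSpace Ω]
    {μ : Measure Ω} [IsProbabilityMeasure μ] {l : Filter ι} {f : ι → Ω → ℝ}
    (hf : ∀ i, AEStronglyMeasurable (f i) μ) (h : Tendsto (fun i => eLpNorm (f i) 2 μ) l (𝓝 0)) :
    Tendsto (fun i => ∫ ω, |f i ω| ∂μ) l (𝓝 0) := by
  have hL1 : Tendsto (fun i => eLpNorm (f i) 1 μ) l (𝓝 0) :=
    tendsto_of_tendsto_of_tendsto_of_le_of_le tendsto_const_nhds h (fun _ => zero_le)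
      fun i => eLpNorm_le_eLpNorm_of_exponent_le one_le_two (hf i)
  have := (ENNReal.tendsto_toReal ENNReal.zero_ne_top).comp hL1
  simpa [Function.comp_def, eLpNorm_one_eq_lintegral_enorm,
    ← integral_norm_eq_lintegral_enorm (hf _)] using this

theorem stmt_19_general {Ω 𝒳 : Type*} [MeasurableSpace Ω] [MeasurableSpace 𝒳]
    (P : Measure Ω) [IsProbabilityMeasure P]
    (X : Ω → 𝒳) (hX : Measurable X)
    (τ : 𝒳 → ℝ) (hτ : Measurable τ)
    (C a : ℝ) (ha : 0 < a)
    (hmargin : ∀ t ≥ (0 : ℝ), (P {ω | |τ (X ω)| ≤ t}).toReal ≤ C * t ^ a) :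
    (∀ τh : 𝒳 → ℝ, Measurable τh →
      Integrable (fun ω => τh (X ω) - τ (X ω)) P →
      ∀ t > (0 : ℝ),
        (∫ ω, ((if 0 < τh (X ω) then (1 : ℝ) else 0)
            - (if 0 < τ (X ω) then (1 : ℝ) else 0)) ^ 2 ∂P)
          ≤ C * t ^ a + (∫ ω, |τh (X ω) - τ (X ω)| ∂P) / t)
    ∧ (∀ τseq : ℕ → 𝒳 → ℝ, (∀ n, Measurable (τseq n)) →
        Tendsto (fun n => eLpNorm (fun ω => τseq n (X ω) - τ (X ω)) 2 P) atTop (nhds 0) →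
        Tendsto (fun n => eLpNorm (fun ω =>
            (if 0 < τseq n (X ω) then (1 : ℝ) else 0)
              - (if 0 < τ (X ω) then (1 : ℝ) else 0)) 2 P) atTop (nhds 0)) := by
  have bound (τh : 𝒳 → ℝ) (hτh : Measurable τh)
      (hint : Integrable (fun ω => τh (X ω) - τ (X ω)) P) (t : ℝ) (ht : 0 < t) :=
    (integral_sq_ite_pos_sub_ite_pos_le_add (hτh.comp hX) (hτ.comp hX) hint ht).trans
      (add_le_add_left (hmargin t ht.le) _)
  refine ⟨bound, fun τseq hτseq hL2 => ?_⟩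
  have hdiff : ∀ n, Measurable fun ω => τseq n (X ω) - τ (X ω) :=
    fun n => ((hτseq n).comp hX).sub (hτ.comp hX)
  have hint : ∀ᶠ n in atTop, Integrable (fun ω => τseq n (X ω) - τ (X ω)) P := by
    filter_upwards [hL2.eventually_lt_const ENNReal.zero_lt_top] with n hn
    exact MemLp.integrable one_le_two ⟨(hdiff n).aestronglyMeasurable, hn⟩
  refine tendsto_eLpNorm_two_of_tendsto_integral_sq
    (fun n => memLp_ite_pos_sub_ite_pos ((hτseq n).comp hX) (hτ.comp hX) 2) ?_
  exact tendsto_zero_of_forall_le_add_div (tendsto_const_mul_rpow_nhdsGT_zero C ha)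
    (tendsto_integral_abs_of_tendsto_eLpNorm_two (fun n => (hdiff n).aestronglyMeasurable) hL2)
    (fun n => integral_nonneg fun ω => sq_nonneg _)
    fun t ht => hint.mono fun n hn => bound (τseq n) (hτseq n) hn t ht

/-- under the margin condition `P[|τ(X)| ≤ t] ≤ C t^a`, with
`h* = 1(τ > 0)` and `ĥ* = 1(τ̂ > 0)`, for every `t > 0`,
`E[(ĥ*(X) - h*(X))²] ≤ C t^a + E|τ̂(X) - τ(X)|/t`; in particular, if
`‖τ̂_n - τ‖_{L₂} → 0` then `‖ĥ*_n - h*‖_{L₂} → 0`. -/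
theorem stmt_19 {Ω 𝒳 : Type*} [MeasurableSpace Ω] [MeasurableSpace 𝒳]
    (P : Measure Ω) [IsProbabilityMeasure P]
    (X : Ω → 𝒳) (hX : Measurable X)
    (τ : 𝒳 → ℝ) (hτ : Measurable τ)
    (C a : ℝ) (hC : 0 < C) (ha : 0 < a)
    (hmargin : ∀ t ≥ (0 : ℝ), (P {ω | |τ (X ω)| ≤ t}).toReal ≤ C * t ^ a) :
    (∀ τh : 𝒳 → ℝ, Measurable τh →
      Integrable (fun ω => τh (X ω) - τ (X ω)) P →
      ∀ t > (0 : ℝ),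
        (∫ ω, ((if 0 < τh (X ω) then (1 : ℝ) else 0)
            - (if 0 < τ (X ω) then (1 : ℝ) else 0)) ^ 2 ∂P)
          ≤ C * t ^ a + (∫ ω, |τh (X ω) - τ (X ω)| ∂P) / t)
    ∧ (∀ τseq : ℕ → 𝒳 → ℝ, (∀ n, Measurable (τseq n)) →
        Tendsto (fun n => eLpNorm (fun ω => τseq n (X ω) - τ (X ω)) 2 P) atTop (nhds 0) →
        Tendsto (fun n => eLpNorm (fun ω =>
            (if 0 < τseq n (X ω) then (1 : ℝ) else 0)
              - (if 0 < τ (X ω) then (1 : ℝ) else 0)) 2 P) atTop (nhds 0)) :=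
  stmt_19_general P X hX τ hτ C a ha hmargin
end
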